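/- arXiv:1406.0867 — 4 statements merged into one kernel-verified Lean document; each statement's English description precedes it below -/
import Mathlib

section
/- Let k be a field of characteristic zero and let A be an affine Poisson k-algebra. If I is a Poisson ideal of A, then the radical of I is a Poisson ideal, and every minimal prime ideal over I is a Poisson (prime) ideal. -/
/-- A Poisson bracket on a commutative `k`-algebra `A`: a `k`-bilinear map which is
antisymmetric, satisfies the Jacobi identity, and the Leibniz rule. -/
structure PoissonBracket (k A : Type*) [CommRing k] [CommRing A] [Algebra k A] where
  br : A →ₗ[k] A →ₗ[k] A
  antisymm : ∀ a b : A, br a b = - br b a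
  jacobi : ∀ a b c : A, br a (br b c) + br c (br a b) + br b (br c a) = 0
  leibniz : ∀ a b c : A, br (a * b) c = a * br b c + b * br a c

/-- An ideal `I` is a Poisson ideal if `{I, A} ⊆ I`. -/
def PoissonBracket.IsPoissonIdeal {k A : Type*} [CommRing k] [CommRing A] [Algebra k A]
    (pb : PoissonBracket k A) (I : Ideal A) : Prop :=
  ∀ a ∈ I, ∀ b : A, pb.br a b ∈ I

lemma PB.br_pow {k A : Type*} [Field k] [CommRing A] [Algebra k A]
    (pb : PoissonBracket k A) (a b : A) (m : ℕ) :
    pb.br (a ^ (m + 1)) b = (m + 1 : ℕ) * a ^ m * pb.br a b := by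
  induction m with
  | zero => simp
  | succ m ih =>
    have : a ^ (m + 2) = a * a ^ (m + 1) := by ring
    rw [this, pb.leibniz, ih]
    push_cast
    ring

lemma PB.cancel_nat (k : Type*) {A : Type*} [Field k] [CharZero k] [CommRing A] [Algebra k A]
    (I : Ideal A) (n : ℕ) (hn : n ≠ 0) (x : A)
    (h : (n : A) * x ∈ I) : x ∈ I := by
  have hx : (algebraMap k A ((n : k)⁻¹)) * ((n : A) * x) ∈ I := I.mul_mem_left _ h
  have hcast : (n : A) = algebraMap k A (n : k) := by simp
  have heq : (algebraMap k A ((n : k)⁻¹)) * ((n : A) * x) = x := by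
    rw [hcast, ← mul_assoc, ← map_mul, inv_mul_cancel₀ (by exact_mod_cast hn), map_one, one_mul]
  rwa [heq] at hx

lemma PB.key {k A : Type*} [Field k] [CharZero k] [CommRing A] [Algebra k A]
    (pb : PoissonBracket k A) {I : Ideal A} (hI : pb.IsPoissonIdeal I) (a b : A) (n : ℕ)
    (hn : a ^ n ∈ I) : ∀ j, j ≤ n → a ^ (n - j) * (pb.br a b) ^ (2 * j + 1) ∈ I := by
  intro j
  induction j with
  | zero =>
    intro _
    simpa using I.mul_mem_right (pb.br a b) hn
  | succ j ih =>
    intro hj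
    have hj' : j ≤ n := Nat.le_of_succ_le hj
    have hx : a ^ (n - j) * (pb.br a b) ^ (2 * j + 1) ∈ I := ih hj'
    set c := pb.br a b with hc
    have hD : pb.br (a ^ (n - j) * c ^ (2 * j + 1)) b ∈ I := hI _ hx b
    have hmul : c * pb.br (a ^ (n - j) * c ^ (2 * j + 1)) b ∈ I := I.mul_mem_left _ hD
    set m := n - j - 1 with hm
    have hm1 : n - j = m + 1 := by omega
    have hm2 : n - (j + 1) = m := by omega
    have expand : c * pb.br (a ^ (n - j) * c ^ (2 * j + 1)) b =
        ((m + 1 : ℕ) : A) * (a ^ (n - (j+1)) * c ^ (2 * (j+1) + 1))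
          + ((2 * j + 1 : ℕ) : A) * pb.br c b * (a ^ (n - j) * c ^ (2 * j + 1)) := by
      rw [hm1, hm2, pb.leibniz, PB.br_pow pb a b m]
      have h2j : (2 * j + 1) = (2 * j) + 1 := rfl
      rw [h2j, PB.br_pow pb c b (2 * j)]
      push_cast
      ring
    have hterm2 : ((2 * j + 1 : ℕ) : A) * pb.br c b * (a ^ (n - j) * c ^ (2 * j + 1)) ∈ I :=
      I.mul_mem_left _ hx
    have h1 : ((m + 1 : ℕ) : A) * (a ^ (n - (j+1)) * c ^ (2 * (j+1) + 1)) ∈ I := by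
      have := I.sub_mem hmul hterm2
      rwa [expand, add_sub_cancel_right] at this
    exact PB.cancel_nat k I (m + 1) (by omega) _ h1

lemma PB.radical_poisson {k A : Type*} [Field k] [CharZero k] [CommRing A] [Algebra k A]
    (pb : PoissonBracket k A) {I : Ideal A} (hI : pb.IsPoissonIdeal I) :
    pb.IsPoissonIdeal I.radical := by
  intro a ha b
  obtain ⟨n, hn⟩ := ha
  have h := PB.key pb hI a b n hn n le_rfl
  simp only [Nat.sub_self, pow_zero, one_mul] at h
  exact ⟨2 * n + 1, h⟩

/-- Let `k` be a field of characteristic zero and `A` an affine Poisson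
`k`-algebra (a finitely generated integral domain `k`-algebra with a Poisson bracket).
If `I` is a Poisson ideal of `A`, then the radical of `I` is a Poisson ideal and every
minimal prime over `I` is a Poisson (prime) ideal. -/
theorem radical_and_minimalPrimes_poisson
    (k A : Type*) [Field k] [CharZero k] [CommRing A] [IsDomain A] [Algebra k A]
    (hfg : Algebra.FiniteType k A) (pb : PoissonBracket k A)
    (I : Ideal A) (hI : pb.IsPoissonIdeal I) :
    pb.IsPoissonIdeal I.radical ∧
      ∀ P ∈ I.minimalPrimes, pb.IsPoissonIdeal P := by
  have hrad : pb.IsPoissonIdeal I.radical := PB.radical_poisson pb hI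
  refine ⟨hrad, ?_⟩
  have hNoeth : IsNoetherianRing A := Algebra.FiniteType.isNoetherianRing k A
  have hfin : I.minimalPrimes.Finite := by
    rw [Ideal.minimalPrimes_eq_comap]
    exact (minimalPrimes.finite_of_isNoetherianRing (A ⧸ I)).image _
  intro P hP a ha b
  have hPprime : P.IsPrime := hP.1.1
  have hIP : I ≤ P := hP.1.2
  have hradP : I.radical ≤ P := hPprime.radical_le_iff.mpr hIP
  set T := I.minimalPrimes \ {P} with hT
  have hTfin : T.Finite := hfin.subset Set.diff_subset
  have hexc : ∃ c, (∀ Q ∈ T, c ∈ Q) ∧ c ∉ P := by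
    by_contra hcon
    push_neg at hcon
    have hle : hTfin.toFinset.inf id ≤ P := by
      intro x hx
      exact hcon x (fun Q hQ => by
        have h := (Finset.inf_le (f := id) (by simpa using hQ) : hTfin.toFinset.inf id ≤ Q)
        exact h hx)
    obtain ⟨Q, hQmem, hQle⟩ := (Ideal.IsPrime.inf_le' hPprime).mp hle
    rw [Set.Finite.mem_toFinset] at hQmem
    obtain ⟨hQmin, hQne⟩ := hQmem
    exact (hQne : Q ∉ ({P} : Set (Ideal A)))
      (by simpa using ((hP.2 hQmin.1 hQle).antisymm hQle).symm)
  obtain ⟨c, hcT, hcP⟩ := hexc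
  have hca : c * a ∈ I.radical := by
    rw [← Ideal.sInf_minimalPrimes, Submodule.mem_sInf]
    intro Q hQ
    rcases eq_or_ne Q P with hQP | hQP
    · subst hQP
      exact Ideal.mul_mem_left Q c ha
    · exact Ideal.mul_mem_right a Q (hcT Q ⟨hQ, hQP⟩)
  have hbr : pb.br (c * a) b ∈ P := hradP (hrad _ hca b)
  rw [pb.leibniz] at hbr
  have h2 : a * pb.br c b ∈ P := P.mul_mem_right _ ha
  have h3 : c * pb.br a b ∈ P := by
    have h4 := P.sub_mem hbr h2
    rwa [add_sub_cancel_right] at h4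
  rcases hPprime.mem_or_mem h3 with h | h
  · exact absurd h hcP
  · exact h
end

section
/- Let k be a field and let A be an integral domain that is a k-algebra, equipped with k-linear derivations δ1,...,δm. Suppose there is a finite-dimensional k-vector subspace V of A and a set S of ideals of A satisfying: (i) δi(I) ⊆ I for all i = 1,...,m and all I ∈ S; (ii) the intersection of all ideals in S is the zero ideal; and (iii) V ∩ I ≠ (0) for all I ∈ S. Then there exists f in the fraction field Frac(A) with f not in (the image of) k such that δi(f) = 0 for all i = 1,...,m, where each δi is extended uniquely to a derivation of Frac(A). -/
/-!
Let `v₁, …, vₙ` be a basis of `V` and consider the `A`-linear relations `g` with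
`∑ g_q · D v_q = 0` for every iterated derivative `D = δ_{i₁} ⋯ δ_{iₖ}`. If there were none, some
`n` iterated derivatives `D₁, …, Dₙ` would give a matrix `(D_p v_q)` with nonzero determinant. But
for `I ∈ S` a nonzero `x = ∑ c_q v_q ∈ V ∩ I` gives `(D_p v_q) c ∈ Iⁿ`, and multiplying by the
adjugate puts the determinant in `I`, hence in `⋂ S = 0`.

The relations form a differential submodule of `Aⁿ`, so for a nonzero relation `g` of minimal
support the relation `g_{q₀} δ g - δ(g_{q₀}) g` vanishes: every ratio `g_q / g_{q₀}` is a constant.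
These constants cannot all lie in `k`, because `∑ g_q v_q = 0` and the `v_q` are `k`-linearly
independent.
-/

open Matrix

namespace Matrix

variable {ι n : Type*} [Fintype n] [DecidableEq n]

theorem exists_det_submatrix_ne_zero_of_injective {K : Type*} [Field K] (M : Matrix ι n K)
    (hM : Function.Injective M.mulVec) : ∃ r : n → ι, (M.submatrix r id).det ≠ 0 := by
  have hspan : Submodule.span K (Set.range M) = ⊤ := by
    by_contra hne
    obtain ⟨f, hf0, hf⟩ :=
      Submodule.exists_dual_map_eq_bot_of_lt_top (lt_top_iff_ne_top.2 hne) inferInstance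
    -- a linear form killing every row is `g ⬝ᵥ ·` for a kernel vector `g` of `M`
    set g := (dotProductEquiv K n).symm f
    have hMg : M *ᵥ g = 0 := funext fun l => by
      rw [mulVec, dotProduct_comm, ← dotProductEquiv_apply_apply, LinearEquiv.apply_symm_apply,
        Pi.zero_apply, ← Submodule.mem_bot K, ← hf]
      exact Submodule.mem_map_of_mem (Submodule.subset_span ⟨l, rfl⟩)
    have hg : g = 0 := hM (hMg.trans (mulVec_zero M).symm)
    exact hf0 (by simpa [g] using hg)
  obtain ⟨κ, a, -, hsp, hli⟩ := exists_linearIndependent' K M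
  let e : κ ≃ n := (Module.Basis.mk hli (hsp.trans hspan).ge).indexEquiv (Pi.basisFun K n)
  refine ⟨a ∘ e.symm, ?_⟩
  have hrows : LinearIndependent K (M.submatrix (a ∘ e.symm) id) :=
    hli.comp e.symm e.symm.injective
  exact ((isUnit_iff_isUnit_det _).1 (linearIndependent_rows_iff_isUnit.1 hrows)).ne_zero

theorem exists_det_submatrix_ne_zero_of_injective_of_isDomain {A : Type*} [CommRing A]
    [IsDomain A] (M : Matrix ι n A) (hM : Function.Injective M.mulVec) :
    ∃ r : n → ι, (M.submatrix r id).det ≠ 0 := by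
  let K := FractionRing A
  let φ := algebraMap A K
  have hφ : Function.Injective φ := IsFractionRing.injective A K
  have hker : ∀ g, M.map φ *ᵥ g = 0 → g = 0 := by
    intro g hg
    obtain ⟨b, hb⟩ := IsLocalization.exist_integer_multiples_of_finite (nonZeroDivisors A) g
    choose g' hg' using hb
    have hMg' : M *ᵥ g' = 0 := funext fun l => hφ <| by
      rw [RingHom.map_mulVec, Pi.zero_apply, map_zero]
      have hφg' : φ ∘ g' = (b : A) • g := funext hg'
      rw [hφg', mulVec_smul, hg, smul_zero, Pi.zero_apply]
    funext q
    have hbg := hg' q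
    rw [congrFun (hM (hMg'.trans (mulVec_zero M).symm)) q, Pi.zero_apply, map_zero, eq_comm,
      Algebra.smul_def, mul_eq_zero, IsFractionRing.to_map_eq_zero_iff] at hbg
    exact hbg.resolve_left (nonZeroDivisors.ne_zero b.2)
  have hMK : Function.Injective (M.map φ).mulVec := fun x y hxy =>
    sub_eq_zero.1 (hker _ (by rw [mulVec_sub, hxy, sub_self]))
  obtain ⟨r, hr⟩ := (M.map φ).exists_det_submatrix_ne_zero_of_injective hMK
  refine ⟨r, fun h => hr ?_⟩
  change (φ.mapMatrix (M.submatrix r id)).det = 0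
  rw [← RingHom.map_det, h, map_zero]

theorem det_mem_of_mulVec_mem {R : Type*} [CommRing R] {I : Ideal R} {N : Matrix n n R}
    {c : n → R} (hNc : ∀ p, (N *ᵥ c) p ∈ I) {q : n} (hq : IsUnit (c q)) : N.det ∈ I := by
  have hdet : N.det • c = N.adjugate *ᵥ (N *ᵥ c) := by
    rw [mulVec_mulVec, adjugate_mul, smul_mulVec, one_mulVec]
  rw [← I.mul_unit_mem_iff_mem hq, ← smul_eq_mul, ← Pi.smul_apply, hdet]
  exact I.sum_mem fun p _ => I.mul_mem_left _ (hNc p)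

end Matrix

namespace Derivation

variable {R A ι : Type*} [CommRing R] [CommRing A] [Algebra R A] (δ : ι → Derivation R A A)

def compList (l : List ι) : Module.End R A := (l.map fun i => (δ i : Module.End R A)).prod

@[simp]
theorem compList_cons (i : ι) (l : List ι) (a : A) :
    compList δ (i :: l) a = δ i (compList δ l a) := rfl

theorem compList_mem {s : Set A} (hs : ∀ a ∈ s, ∀ i, δ i a ∈ s) (l : List ι) {a : A}
    (ha : a ∈ s) : compList δ l a ∈ s := by
  induction l with
  | nil => exact ha
  | cons i l ih => exact hs _ ih i

variable {n : Type*} [Fintype n]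

def derivMatrix (v : n → A) : Matrix (List ι) n A := Matrix.of fun l q => compList δ l (v q)

theorem derivMatrix_mulVec_nil (v g : n → A) : (derivMatrix δ v *ᵥ g) [] = v ⬝ᵥ g := rfl

theorem derivMatrix_mulVec_algebraMap (v : n → A) (c : n → R) (l : List ι) :
    (derivMatrix δ v *ᵥ (algebraMap R A ∘ c)) l = compList δ l (∑ q, c q • v q) := by
  simp only [derivMatrix, mulVec, dotProduct, of_apply, Function.comp_apply, map_sum,
    LinearMap.map_smul]
  simp [Algebra.smul_def, mul_comm]

theorem derivMatrix_mulVec_deriv {v g : n → A} (hg : derivMatrix δ v *ᵥ g = 0) (i : ι) :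
    derivMatrix δ v *ᵥ (fun q => δ i (g q)) = 0 := by
  funext l
  have hleib : δ i ((derivMatrix δ v *ᵥ g) l) =
      (derivMatrix δ v *ᵥ g) (i :: l) + (derivMatrix δ v *ᵥ fun q => δ i (g q)) l := by
    simp [derivMatrix, mulVec, dotProduct, Finset.sum_add_distrib, mul_comm]
  rw [hg] at hleib
  simpa using hleib.symm

variable {k : Type*} [Field k] [Algebra k A] [DecidableEq n]

theorem det_submatrix_derivMatrix_mem (δ : ι → Derivation k A A) (v : n → A) (r : n → List ι)
    {I : Ideal A} (hI : ∀ a ∈ I, ∀ i, δ i a ∈ I) {x : A} (hxI : x ∈ I)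
    (hxv : x ∈ Submodule.span k (Set.range v)) (hx0 : x ≠ 0) :
    ((derivMatrix δ v).submatrix r id).det ∈ I := by
  obtain ⟨c, rfl⟩ := Submodule.mem_span_range_iff_exists_fun k |>.1 hxv
  obtain ⟨q, hq⟩ : ∃ q, c q ≠ 0 := by
    by_contra! hc
    simp [hc] at hx0
  refine det_mem_of_mulVec_mem (c := algebraMap k A ∘ c) (fun p => ?_) ((Ne.isUnit hq).map _)
  change (derivMatrix δ v *ᵥ (algebraMap k A ∘ c)) (r p) ∈ I
  rw [derivMatrix_mulVec_algebraMap]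
  exact compList_mem δ hI (r p) hxI

end Derivation

theorem Submodule.exists_mem_constant_ratios {R A ι n : Type*} [CommRing R] [CommRing A]
    [Algebra R A] [Fintype n] (δ : ι → Derivation R A A) {N : Submodule A (n → A)}
    (hN : N ≠ ⊥) (hδ : ∀ g ∈ N, ∀ i, (fun q => δ i (g q)) ∈ N) :
    ∃ g ∈ N, ∃ q₀, g q₀ ≠ 0 ∧ ∀ i q, g q₀ * δ i (g q) = δ i (g q₀) * g q := by
  classical
  obtain ⟨g, ⟨hgN, hg0⟩, hmin⟩ :=
    (measure fun g : n → A => (Finset.univ.filter (g · ≠ 0)).card).wf.has_min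
      {g | g ∈ N ∧ g ≠ 0} ((Submodule.ne_bot_iff N).1 hN)
  obtain ⟨q₀, hq₀⟩ := Function.ne_iff.1 hg0
  refine ⟨g, hgN, q₀, hq₀, fun i q => ?_⟩
  set h : n → A := g q₀ • (fun q => δ i (g q)) - δ i (g q₀) • g with h_def
  have hhN : h ∈ N := N.sub_mem (N.smul_mem _ (hδ g hgN i)) (N.smul_mem _ hgN)
  suffices h = 0 by
    simpa [h_def, sub_eq_zero] using congrFun this q
  by_contra hh0
  refine hmin h ⟨hhN, hh0⟩ (Finset.card_lt_card ?_)
  refine (Finset.ssubset_iff_of_subset fun p hp => ?_).2 ⟨q₀, by simpa using hq₀, ?_⟩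
  · simp only [Finset.mem_filter, Finset.mem_univ, true_and] at hp ⊢
    contrapose! hp
    simp [h_def, hp]
  · simp [h_def, mul_comm]

theorem LinearIndependent.exists_not_algebraMap_mul_of_dotProduct_eq_zero {k A n : Type*}
    [Field k] [CommRing A] [IsDomain A] [Algebra k A] [Fintype n] {v : n → A}
    (hv : LinearIndependent k v) {g : n → A} (hvg : v ⬝ᵥ g = 0) {q₀ : n} (hq₀ : g q₀ ≠ 0) :
    ∃ q, ¬ ∃ c : k, g q = algebraMap k A c * g q₀ := by
  by_contra! hall
  choose c hc using hall
  have hsum : g q₀ * ∑ q, c q • v q = 0 := by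
    rw [← hvg, dotProduct, Finset.mul_sum]
    refine Finset.sum_congr rfl fun q _ => ?_
    rw [hc q, Algebra.smul_def]
    ring
  have hc0 := Fintype.linearIndependent_iff.1 hv c ((mul_eq_zero.1 hsum).resolve_left hq₀) q₀
  exact hq₀ (by rw [hc q₀, hc0, map_zero, zero_mul])

/-- Let `k` be a field and `A` an integral domain `k`-algebra with
`k`-linear derivations `δ 1, …, δ m`.  Suppose there is a finite-dimensional `k`-subspace
`V` of `A` and a set `S` of ideals such that (i) every ideal in `S` is a differential
ideal, (ii) the intersection of the ideals in `S` is zero, and (iii) every ideal in `S`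
meets `V` nontrivially.  Then there is `f ∈ Frac(A) ∖ k` with `δ i f = 0` for all `i`.
The conclusion is expressed via a representation `f = a / b`: the unique extension of
`δ` to `Frac(A)` kills `a / b` iff `δ a * b = a * δ b`, and `a / b` lies in (the image
of) `k` iff `a = c • b` for some `c : k`. -/
theorem exists_nonconstant_differential_constant
    (k A : Type*) [Field k] [CommRing A] [IsDomain A] [Algebra k A]
    (m : ℕ) (δ : Fin m → Derivation k A A)
    (V : Submodule k A) (hV : FiniteDimensional k V)
    (S : Set (Ideal A))
    (h1 : ∀ I ∈ S, ∀ a ∈ I, ∀ i : Fin m, δ i a ∈ I)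
    (h2 : sInf S = ⊥)
    (h3 : ∀ I ∈ S, ∃ v : A, v ≠ 0 ∧ v ∈ V ∧ v ∈ I) :
    ∃ a b : A, b ≠ 0 ∧ (¬ ∃ c : k, a = algebraMap k A c * b) ∧
      ∀ i : Fin m, δ i a * b = a * δ i b := by
  let b := Module.finBasis k V
  let v := V.subtype ∘ b
  have hv : LinearIndependent k v := b.linearIndependent.map' V.subtype V.ker_subtype
  have hspan : Submodule.span k (Set.range v) = V := by
    rw [Set.range_comp, Submodule.span_image, b.span_eq, Submodule.map_subtype_top]
  let W := Derivation.derivMatrix δ v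
  have hker : LinearMap.ker W.mulVecLin ≠ ⊥ := by
    rw [Ne, LinearMap.ker_eq_bot]
    intro hinj
    obtain ⟨r, hr⟩ := W.exists_det_submatrix_ne_zero_of_injective_of_isDomain hinj
    have hmem : (W.submatrix r id).det ∈ sInf S := Ideal.mem_sInf.2 fun {I} hI => by
      obtain ⟨x, hx0, hxV, hxI⟩ := h3 I hI
      exact Derivation.det_submatrix_derivMatrix_mem δ v r (h1 I hI) hxI (hspan.symm ▸ hxV) hx0
    exact hr (by simpa [h2] using hmem)
  obtain ⟨g, hgW, q₀, hq₀, hconst⟩ := Submodule.exists_mem_constant_ratios δ hker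
    fun g hg i => Derivation.derivMatrix_mulVec_deriv δ (v := v) hg i
  have hvg : v ⬝ᵥ g = 0 := by
    rw [← Derivation.derivMatrix_mulVec_nil δ]
    exact congrFun hgW []
  obtain ⟨q, hq⟩ := hv.exists_not_algebraMap_mul_of_dotProduct_eq_zero hvg hq₀
  exact ⟨g q, g q₀, hq₀, hq, fun i => by linear_combination hconst i q⟩
end

section
/- Let k be a field of characteristic zero, and let R be an integral domain k-algebra endowed with a nontrivial k-linear derivation δ. Define on the polynomial ring R[t] the bracket {p(t), q(t)} := p^δ(t)·q'(t) − p'(t)·q^δ(t), where p^δ denotes the polynomial obtained by applying δ to the coefficients of p and p' denotes the formal derivative d/dt. Then this is a Poisson bracket over k on R[t], and moreover: (1) the Poisson center of Frac(R[t]) (with the uniquely extended bracket) is equal to the field of constants of (Frac(R), δ), i.e., to {f ∈ Frac(R) : δ(f) = 0}; and (2) if P is a prime differential ideal of R, then the extension PR[t] is a Poisson prime ideal of R[t]. -/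
/-- `p^δ`: the polynomial obtained by applying the derivation `δ` to all the
coefficients of `p`. -/
noncomputable def coeffDeriv {k R : Type*} [CommRing k] [CommRing R] [Algebra k R]
    (δ : Derivation k R R) (p : Polynomial R) : Polynomial R :=
  p.sum fun n a => Polynomial.C (δ a) * Polynomial.X ^ n

/-! The bracket is `{p, q} = D₁ p · D₂ q - D₂ p · D₁ q` for the two commuting derivations
`D₁ = (·)^δ` and `D₂ = d/dt` of `R[t]`, and any such bracket is Poisson; an ideal stable under
both derivations is then Poisson.

An element `x / y` of the fraction field is Poisson central iff `y {x, u} = x {y, u}` for every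
`u ∈ R[t]`. Testing `p / q` against a constant `c` with `δ c ≠ 0` gives `p' q = p q'`, which in
characteristic zero forces `p / q` to be a quotient of constants `a / b`; testing `a / b`
against `t` then gives `δ a · b = a · δ b`. -/

open Polynomial

namespace PoissonBracket

section CommutingDerivations

variable {k A : Type*} [CommRing k] [CommRing A] [Algebra k A]
  (D₁ D₂ : Derivation k A A) (hD : ∀ a, D₁ (D₂ a) = D₂ (D₁ a))

def ofCommutingDerivations : PoissonBracket k A where
  br := LinearMap.mk₂ k (fun a b => D₁ a * D₂ b - D₂ a * D₁ b)
    (fun a a' b => by simp only [map_add]; ring)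
    (fun c a b => by simp only [Derivation.map_smul, smul_mul_assoc, smul_sub])
    (fun a b b' => by simp only [map_add]; ring)
    (fun c a b => by simp only [Derivation.map_smul, mul_smul_comm, smul_sub])
  antisymm a b := by simp only [LinearMap.mk₂_apply]; ring
  jacobi a b c := by
    simp only [LinearMap.mk₂_apply, map_sub, Derivation.leibniz, smul_eq_mul, hD]
    ring
  leibniz a b c := by
    simp only [LinearMap.mk₂_apply, Derivation.leibniz, smul_eq_mul]
    ring

theorem ofCommutingDerivations_br (a b : A) :
    (ofCommutingDerivations D₁ D₂ hD).br a b = D₁ a * D₂ b - D₂ a * D₁ b :=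
  rfl

theorem isPoissonIdeal_ofCommutingDerivations {I : Ideal A} (h₁ : ∀ a ∈ I, D₁ a ∈ I)
    (h₂ : ∀ a ∈ I, D₂ a ∈ I) : (ofCommutingDerivations D₁ D₂ hD).IsPoissonIdeal I :=
  fun a ha _ => sub_mem (I.mul_mem_right _ (h₁ a ha)) (I.mul_mem_right _ (h₂ a ha))

end CommutingDerivations

section Field

variable {k F : Type*} [CommRing k] [Field F] [Algebra k F] (pb : PoissonBracket k F)

theorem br_div_left {y : F} (hy : y ≠ 0) (x g : F) :
    pb.br (x / y) g = (y * pb.br x g - x * pb.br y g) / y ^ 2 := by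
  have key : pb.br x g = x / y * pb.br y g + y * pb.br (x / y) g := by
    conv_lhs => rw [← div_mul_cancel₀ x hy]
    exact pb.leibniz _ _ _
  rw [eq_div_iff (pow_ne_zero 2 hy), key]
  field_simp
  ring

theorem br_div_left_eq_zero_iff {y : F} (hy : y ≠ 0) (x g : F) :
    pb.br (x / y) g = 0 ↔ y * pb.br x g = x * pb.br y g := by
  rw [br_div_left pb hy, div_eq_zero_iff, sub_eq_zero, or_iff_left (pow_ne_zero 2 hy)]

theorem forall_br_eq_zero_iff_of_isFractionRing (B : Type*) [CommRing B] [IsDomain B]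
    [Algebra B F] [IsFractionRing B F] (f : F) :
    (∀ g, pb.br f g = 0) ↔ ∀ b : B, pb.br f (algebraMap B F b) = 0 := by
  refine ⟨fun hf b => hf _, fun hf g => ?_⟩
  obtain ⟨u, v, hv, rfl⟩ := IsFractionRing.div_surjective (A := B) g
  rw [pb.antisymm, neg_eq_zero,
    br_div_left_eq_zero_iff pb (IsFractionRing.to_map_ne_zero_of_mem_nonZeroDivisors hv),
    pb.antisymm, hf, pb.antisymm, hf, neg_zero, mul_zero, mul_zero]

theorem forall_br_div_eq_zero_iff {B : Type*} [CommRing B] [IsDomain B] [Algebra k B]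
    [Algebra B F] [IsFractionRing B F] (pbB : PoissonBracket k B)
    (hpb : ∀ a b, pb.br (algebraMap B F a) (algebraMap B F b) = algebraMap B F (pbB.br a b))
    {p q : B} (hq : q ≠ 0) :
    (∀ g, pb.br (algebraMap B F p / algebraMap B F q) g = 0) ↔
      ∀ u, q * pbB.br p u = p * pbB.br q u := by
  rw [forall_br_eq_zero_iff_of_isFractionRing pb B]
  refine forall_congr' fun u => ?_
  rw [br_div_left_eq_zero_iff pb ((map_ne_zero_iff _ (IsFractionRing.injective B F)).2 hq),
    hpb, hpb, ← map_mul, ← map_mul, (IsFractionRing.injective B F).eq_iff]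

end Field

end PoissonBracket

section CoeffDeriv

variable {k R : Type*} [CommRing k] [CommRing R] [Algebra k R] (δ : Derivation k R R)

theorem coeff_coeffDeriv (p : R[X]) (n : ℕ) : (coeffDeriv δ p).coeff n = δ (p.coeff n) := by
  rw [coeffDeriv, coeff_sum]
  simp only [coeff_C_mul, coeff_X_pow, mul_ite, mul_one, mul_zero]
  rw [Polynomial.sum_def, Finset.sum_ite_eq p.support n fun i => δ (p.coeff i)]
  split_ifs with h
  · rfl
  · rw [notMem_support_iff.mp h, map_zero]

theorem coeffDeriv_C (a : R) : coeffDeriv δ (C a) = C (δ a) := by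
  ext (_ | n) <;> simp [coeff_coeffDeriv, coeff_C]

theorem coeffDeriv_X : coeffDeriv δ (X : R[X]) = 0 := by
  ext n
  rw [coeff_coeffDeriv, coeff_X, coeff_zero]
  split_ifs <;> simp

theorem coeffDeriv_derivative (p : R[X]) :
    coeffDeriv δ (derivative p) = derivative (coeffDeriv δ p) := by
  ext n
  simp [coeff_coeffDeriv, coeff_derivative, mul_comm]

noncomputable def coeffDerivation : Derivation k R[X] R[X] :=
  Derivation.mk'
    { toFun := coeffDeriv δ
      map_add' := fun p q => by ext n; simp [coeff_coeffDeriv]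
      map_smul' := fun c p => by ext n; simp [coeff_coeffDeriv, coeff_smul] }
    fun p q => by
      change coeffDeriv δ (p * q) = p * coeffDeriv δ q + q * coeffDeriv δ p
      ext n
      rw [mul_comm q]
      simp only [coeff_add, coeff_coeffDeriv, coeff_mul, map_sum, Derivation.leibniz, ← Finset.sum_add_distrib]
      exact Finset.sum_congr rfl fun x _ => by ring

noncomputable def polynomialBracket : PoissonBracket k R[X] :=
  PoissonBracket.ofCommutingDerivations (coeffDerivation δ) (derivative'.restrictScalars k)
    (coeffDeriv_derivative δ)

theorem polynomialBracket_br (p q : R[X]) :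
    (polynomialBracket δ).br p q =
      coeffDeriv δ p * derivative q - derivative p * coeffDeriv δ q :=
  rfl

theorem polynomialBracket_C_left (a : R) (u : R[X]) :
    (polynomialBracket δ).br (C a) u = C (δ a) * derivative u := by
  rw [polynomialBracket_br, coeffDeriv_C, derivative_C, zero_mul, sub_zero]

theorem polynomialBracket_C_right (p : R[X]) (c : R) :
    (polynomialBracket δ).br p (C c) = -(derivative p * C (δ c)) := by
  rw [polynomialBracket_br, coeffDeriv_C, derivative_C, mul_zero, zero_sub]

theorem polynomialBracket_X_right (p : R[X]) : (polynomialBracket δ).br p X = coeffDeriv δ p := by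
  rw [polynomialBracket_br, coeffDeriv_X, derivative_X, mul_one, mul_zero, sub_zero]

theorem isPoissonIdeal_polynomialBracket_map_C {P : Ideal R} (hP : ∀ x ∈ P, δ x ∈ P) :
    (polynomialBracket δ).IsPoissonIdeal (P.map C) := by
  refine PoissonBracket.isPoissonIdeal_ofCommutingDerivations _ _ _ (fun p hp => ?_)
    fun p hp => ?_ <;> rw [Ideal.mem_map_C_iff] at hp ⊢ <;> intro n
  · exact (coeff_coeffDeriv δ p n).symm ▸ hP _ (hp n)
  · exact (coeff_derivative p n).symm ▸ P.mul_mem_right _ (hp _)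

end CoeffDeriv

section Wronskian

theorem coeff_X_mul_derivative {R : Type*} [Semiring R] (p : R[X]) (n : ℕ) :
    (X * derivative p).coeff n = n * p.coeff n := by
  rcases n with _ | n
  · simp
  · rw [coeff_X_mul, coeff_derivative, ← Nat.cast_succ, Nat.cast_comm]

theorem natDegree_X_mul_derivative_le {R : Type*} [Semiring R] (p : R[X]) :
    (X * derivative p).natDegree ≤ p.natDegree :=
  natDegree_le_iff_coeff_eq_zero.2 fun n hn => by
    rw [coeff_X_mul_derivative, coeff_eq_zero_of_natDegree_lt hn, mul_zero]

variable {R : Type*} [CommRing R] [IsDomain R] [CharZero R]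

/-- Top-degree coefficients of `t (p' q - p q') = 0`: `(deg p - deg q) lc p lc q = 0`. -/
theorem natDegree_eq_of_derivative_mul_eq {p q : R[X]} (hp : p ≠ 0) (hq : q ≠ 0)
    (h : derivative p * q = p * derivative q) : p.natDegree = q.natDegree := by
  have key : (X * derivative p * q).coeff (p.natDegree + q.natDegree) =
      (p * (X * derivative q)).coeff (p.natDegree + q.natDegree) :=
    congrArg (coeff · _) (by linear_combination X * h)
  rw [coeff_mul_add_eq_of_natDegree_le (natDegree_X_mul_derivative_le p) le_rfl,
    coeff_mul_add_eq_of_natDegree_le le_rfl (natDegree_X_mul_derivative_le q),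
    coeff_X_mul_derivative, coeff_X_mul_derivative, coeff_natDegree, coeff_natDegree] at key
  have hcast : (p.natDegree : R) = q.natDegree :=
    mul_right_cancel₀ (mul_ne_zero (leadingCoeff_ne_zero.2 hp) (leadingCoeff_ne_zero.2 hq))
      (by linear_combination key)
  exact_mod_cast hcast

theorem exists_C_mul_eq_C_mul_of_derivative_mul_eq {p q : R[X]} (hq : q ≠ 0)
    (h : derivative p * q = p * derivative q) : ∃ a b : R, b ≠ 0 ∧ p * C b = q * C a := by
  refine ⟨p.coeff q.natDegree, q.leadingCoeff, leadingCoeff_ne_zero.2 hq, ?_⟩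
  set r := p * C q.leadingCoeff - q * C (p.coeff q.natDegree)
  by_contra hpq
  have hr : r ≠ 0 := sub_ne_zero.2 hpq
  have hrq : derivative r * q = r * derivative q := by
    simp only [r, derivative_sub, derivative_mul, derivative_C, mul_zero, add_zero]
    linear_combination C q.leadingCoeff * h
  have hdeg := natDegree_eq_of_derivative_mul_eq hr hq hrq
  refine leadingCoeff_ne_zero.2 hr ?_
  rw [leadingCoeff, hdeg, coeff_sub, coeff_mul_C, coeff_mul_C, coeff_natDegree, mul_comm,
    sub_self]

end Wronskian

theorem forall_br_eq_zero_iff_exists_div_C {k R : Type*} [CommRing k] [CommRing R]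
    [IsDomain R] [CharZero R] [Algebra k R] (δ : Derivation k R R) (hδ : δ ≠ 0)
    (pbF : PoissonBracket k (FractionRing R[X]))
    (hpbF : ∀ p q : R[X], pbF.br (algebraMap R[X] (FractionRing R[X]) p)
        (algebraMap R[X] (FractionRing R[X]) q) =
      algebraMap R[X] (FractionRing R[X]) ((polynomialBracket δ).br p q))
    (f : FractionRing R[X]) :
    (∀ g, pbF.br f g = 0) ↔ ∃ a b : R, b ≠ 0 ∧ δ a * b = a * δ b ∧
      f = algebraMap R[X] (FractionRing R[X]) (C a) /
        algebraMap R[X] (FractionRing R[X]) (C b) := by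
  constructor
  · intro hf
    obtain ⟨p, q, hq, rfl⟩ := IsFractionRing.div_surjective (A := R[X]) f
    have hq0 : q ≠ 0 := nonZeroDivisors.ne_zero hq
    obtain ⟨c, hc⟩ : ∃ c, δ c ≠ 0 := by
      by_contra! h
      exact hδ (Derivation.ext h)
    have hW : derivative p * q = p * derivative q := by
      have hC := (pbF.forall_br_div_eq_zero_iff _ hpbF hq0).1 hf (C c)
      rw [polynomialBracket_C_right, polynomialBracket_C_right] at hC
      exact mul_right_cancel₀ (C_ne_zero.2 hc) (by linear_combination -hC)
    obtain ⟨a, b, hb, hab⟩ := exists_C_mul_eq_C_mul_of_derivative_mul_eq hq0 hW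
    have hfab : algebraMap R[X] (FractionRing R[X]) p / algebraMap R[X] (FractionRing R[X]) q =
        algebraMap R[X] _ (C a) / algebraMap R[X] _ (C b) := by
      rw [div_eq_div_iff (IsFractionRing.to_map_ne_zero_of_mem_nonZeroDivisors hq)
        ((map_ne_zero_iff _ (IsFractionRing.injective R[X] _)).2 (C_ne_zero.2 hb)), ← map_mul,
        ← map_mul, hab, mul_comm]
    refine ⟨a, b, hb, ?_, hfab⟩
    rw [hfab] at hf
    have hX := (pbF.forall_br_div_eq_zero_iff _ hpbF (C_ne_zero.2 hb)).1 hf X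
    rw [polynomialBracket_X_right, polynomialBracket_X_right, coeffDeriv_C, coeffDeriv_C,
      ← C_mul, ← C_mul, C_inj] at hX
    linear_combination hX
  · rintro ⟨a, b, hb, hab, rfl⟩
    rw [pbF.forall_br_div_eq_zero_iff _ hpbF (C_ne_zero.2 hb)]
    intro u
    rw [polynomialBracket_C_left, polynomialBracket_C_left]
    have hC : C (δ a) * C b = C a * C (δ b) := by rw [← C_mul, ← C_mul, hab]
    linear_combination derivative u * hC

/-- Let `k` be a field of characteristic zero and `R` an integral domain
`k`-algebra with a nontrivial `k`-linear derivation `δ`.  Then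
`{p, q} := p^δ * q' - p' * q^δ` is a Poisson bracket over `k` on `R[t]`; moreover
(1) the Poisson center of `Frac(R[t])` (with the uniquely extended bracket, captured by
quantifying over compatible brackets on `Frac(R[t])`) is exactly the field of constants of
`(Frac R, δ)`, i.e. consists precisely of the elements `a / b` with `a, b ∈ R`, `b ≠ 0`
and `δ(a/b) = 0` (i.e. `δ a * b = a * δ b`); and
(2) if `P` is a prime differential ideal of `R` then `P·R[t]` is a Poisson prime ideal
of `R[t]`. -/
theorem polynomial_poissonBracket_from_derivation
    (k R : Type*) [Field k] [CharZero k] [CommRing R] [IsDomain R] [Algebra k R]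
    (δ : Derivation k R R) (hδ : δ ≠ 0) :
    ∃ pb : PoissonBracket k (Polynomial R),
      (∀ p q : Polynomial R,
        pb.br p q = coeffDeriv δ p * Polynomial.derivative q
          - Polynomial.derivative p * coeffDeriv δ q) ∧
      (∀ pbF : PoissonBracket k (FractionRing (Polynomial R)),
        (∀ p q : Polynomial R,
          pbF.br (algebraMap (Polynomial R) (FractionRing (Polynomial R)) p)
              (algebraMap (Polynomial R) (FractionRing (Polynomial R)) q) =
            algebraMap (Polynomial R) (FractionRing (Polynomial R)) (pb.br p q)) →
        ∀ f : FractionRing (Polynomial R),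
          (∀ g, pbF.br f g = 0) ↔
            ∃ a b : R, b ≠ 0 ∧ δ a * b = a * δ b ∧
              f = algebraMap (Polynomial R) (FractionRing (Polynomial R)) (Polynomial.C a)
                / algebraMap (Polynomial R) (FractionRing (Polynomial R)) (Polynomial.C b)) ∧
      (∀ P : Ideal R, P.IsPrime → (∀ x ∈ P, δ x ∈ P) →
        (P.map (Polynomial.C : R →+* Polynomial R)).IsPrime ∧
          pb.IsPoissonIdeal (P.map (Polynomial.C : R →+* Polynomial R))) := by
  have : CharZero R := charZero_of_injective_algebraMap (algebraMap k R).injective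
  refine ⟨polynomialBracket δ, polynomialBracket_br δ,
    forall_br_eq_zero_iff_exists_div_C δ hδ, fun P _ hPδ =>
      ⟨Ideal.isPrime_map_C_of_isPrime, isPoissonIdeal_polynomialBracket_map_C δ hPδ⟩⟩
end

section
/- Let A be a complex affine Poisson algebra (a finitely generated integral domain ℂ-algebra with a Poisson bracket) of Krull dimension d, and suppose the Poisson bracket is not identically zero. Then the intersection of all Poisson prime ideals of A of height at least d − 1 is a nonzero ideal. In fact, every Poisson prime ideal of height at least d − 1 contains {a,b} for all a, b ∈ A. -/
/-- The height of an ideal `P`: the supremum of lengths `n` of chains of prime ideals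
`P₀ ⊊ P₁ ⊊ ⋯ ⊊ Pₙ = P`, computed as the chain height of the set of primes strictly
below `P`. -/
noncomputable def idealHeight {A : Type*} [CommRing A] (P : Ideal A) : ℕ∞ :=
  Set.chainHeight {Q : Ideal A | Q.IsPrime ∧ Q < P} (· < ·)

/-!
If `{a, b} ∉ P` for a Poisson prime `P`, the Hamiltonian derivations `{b, -}` and `{a, -}` descend
to `A ⧸ P`: the first moves `a`, the second kills `a` but moves `b`. In characteristic zero a
derivation that kills `R` and does not kill `t` forces `t` to be transcendental over `R`, so the
images of `a` and `b` are algebraically independent. Localizing `A ⧸ P` at the nonzero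
polynomials in `a` and applying Zariski's lemma then yields a chain `0 < Q₁ < Q₂` of primes, so
`dim (A ⧸ P) ≥ 2` and `ht P ≤ dim A - dim (A ⧸ P) ≤ d - 2`.
-/

open Polynomial

namespace Derivation

variable {R A : Type*} [CommRing R] [CommRing A] [Algebra R A]

def quotient (D : Derivation R A A) (I : Ideal A) (hI : ∀ x ∈ I, D x ∈ I) :
    Derivation R (A ⧸ I) (A ⧸ I) where
  toLinearMap := (Submodule.Quotient.restrictScalarsEquiv R I).toLinearMap ∘ₗ
    (I.restrictScalars R).mapQ (I.restrictScalars R) D.toLinearMap hI ∘ₗ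
    (Submodule.Quotient.restrictScalarsEquiv R I).symm.toLinearMap
  map_one_eq_zero' := by
    change Ideal.Quotient.mk I (D 1) = 0
    rw [D.map_one_eq_zero, map_zero]
  leibniz' x y := by
    obtain ⟨x, rfl⟩ := Ideal.Quotient.mk_surjective x
    obtain ⟨y, rfl⟩ := Ideal.Quotient.mk_surjective y
    change Ideal.Quotient.mk I (D (x * y)) = _
    rw [D.leibniz, map_add, smul_eq_mul, smul_eq_mul]
    rfl

def extendScalars (D : Derivation R A A) (S : Subalgebra R A) (hS : ∀ s ∈ S, D s = 0) :
    Derivation S A A where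
  toFun := D
  map_add' := D.map_add
  map_smul' s x := by
    rw [Subalgebra.smul_def, smul_eq_mul, D.leibniz, hS s s.2, smul_zero, add_zero]
    rfl
  map_one_eq_zero' := D.map_one_eq_zero
  leibniz' := D.leibniz

@[simp]
theorem extendScalars_apply (D : Derivation R A A) (S : Subalgebra R A)
    (hS : ∀ s ∈ S, D s = 0) (x : A) : D.extendScalars S hS x = D x :=
  rfl

theorem transcendental_of_ne_zero {B : Type*} [CommRing B] [IsDomain B] [CharZero B]
    [Algebra R B] [FaithfulSMul R B] (D : Derivation R B B) {t : B} (ht : D t ≠ 0) :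
    Transcendental R t := by
  have : IsAddTorsionFree R := Function.Injective.isAddTorsionFree
    (algebraMap R B).toAddMonoidHom (FaithfulSMul.algebraMap_injective R B)
  rintro ⟨p, hp, hpt⟩
  induction hn : p.natDegree using Nat.strong_induction_on generalizing p with
  | _ n ih =>
  obtain hn0 | hn0 := eq_or_ne n 0
  · have hpC := Polynomial.eq_C_of_natDegree_eq_zero (hn.trans hn0)
    rw [hpC, aeval_C, map_eq_zero_iff _ (FaithfulSMul.algebraMap_injective R B)] at hpt
    exact hp (by rw [hpC, hpt, map_zero])
  · have hderiv : aeval t (derivative p) = 0 := by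
      have := D.map_aeval p t
      rwa [hpt, D.map_zero, eq_comm, smul_eq_mul, mul_eq_zero, or_iff_left ht] at this
    have hp0 : p.natDegree ≠ 0 := hn ▸ hn0
    exact ih _ (hn ▸ natDegree_derivative_lt hp0) (derivative p)
      (by rwa [ne_eq, derivative_eq_zero]) hderiv rfl

end Derivation

theorem Transcendental.algebraMap_injective {R B : Type*} [CommRing R] [CommRing B] [Algebra R B]
    {y : B} (hy : Transcendental R y) : Function.Injective (algebraMap R B) := by
  simpa [Function.comp_def] using (transcendental_iff_injective.mp hy).comp C_injective

open scoped nonZeroDivisors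

universe u

section FiniteType

variable {R B : Type u} [CommRing R] [IsDomain R] [CommRing B] [IsDomain B] [Algebra R B]
  [Algebra.FiniteType R B]

theorem not_isField_localization_of_transcendental {y : B} (hy : Transcendental R y) :
    ¬ IsField (Localization (Algebra.algebraMapSubmonoid B R⁰)) := by
  set B' := Localization (Algebra.algebraMapSubmonoid B R⁰)
  -- A field of finite type over `Frac R` is finite over it (Zariski), so `y` would be algebraic.
  intro hField
  let := hField.toField
  have : IsLocalization (R⁰.map (algebraMap R B)) B' := Localization.isLocalization
  have : Algebra.FiniteType (FractionRing R) B' :=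
    RingHom.finiteType_algebraMap.mp <| RingHom.finiteType_localizationPreserves
      (algebraMap R B) R⁰ (FractionRing R) B' (RingHom.finiteType_algebraMap.mpr ‹_›)
  have := finite_of_finite_type_of_isJacobsonRing (FractionRing R) B'
  have hy' : IsAlgebraic (FractionRing R) (algebraMap B B' y) :=
    (Algebra.IsIntegral.isIntegral _).isAlgebraic
  rw [← IsFractionRing.isAlgebraic_iff R (FractionRing R) B'] at hy'
  exact hy ((isAlgebraic_algHom_iff (IsScalarTower.toAlgHom R B B') (IsLocalization.injective B'
    (map_le_nonZeroDivisors_of_injective _ hy.algebraMap_injective le_rfl))).mp hy')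

theorem exists_isPrime_ne_bot_comap_eq_bot_of_transcendental {y : B} (hy : Transcendental R y) :
    ∃ Q : Ideal B, Q.IsPrime ∧ Q ≠ ⊥ ∧ Q.comap (algebraMap R B) = ⊥ := by
  set S := Algebra.algebraMapSubmonoid B R⁰
  have hS : S ≤ B⁰ := map_le_nonZeroDivisors_of_injective _ hy.algebraMap_injective le_rfl
  have : IsDomain (Localization S) := IsLocalization.isDomain_localization hS
  obtain ⟨p, hp, hpPrime⟩ :=
    Ring.not_isField_iff_exists_prime.mp (not_isField_localization_of_transcendental hy)
  refine ⟨p.comap (algebraMap B _), hpPrime.comap _, fun h ↦ hp ?_, ?_⟩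
  · rw [← IsLocalization.map_under S (Localization S) p, Ideal.under, h, Ideal.map_bot]
  · refine eq_bot_iff.mpr fun r hr ↦ Ideal.mem_bot.mpr ?_
    by_contra hr0
    have hunit : IsUnit (algebraMap B (Localization S) (algebraMap R B r)) :=
      IsLocalization.map_units _ (⟨_, r, mem_nonZeroDivisors_of_ne_zero hr0, rfl⟩ : S)
    exact hpPrime.ne_top (p.eq_top_of_isUnit_mem hr hunit)

end FiniteType

theorem Ideal.IsMaximal.exists_monic_aeval_mem {k B : Type*} [Field k] [CommRing B] [Algebra k B]
    [Algebra.FiniteType k B] {Q : Ideal B} (hQ : Q.IsMaximal) (x : B) :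
    ∃ q : k[X], q.Monic ∧ aeval x q ∈ Q := by
  let := Ideal.Quotient.field Q
  have := finite_of_finite_type_of_isJacobsonRing k (B ⧸ Q)
  obtain ⟨q, hq, hqx⟩ := Algebra.IsIntegral.isIntegral (R := k) (Ideal.Quotient.mk Q x)
  refine ⟨q, hq, Ideal.Quotient.eq_zero_iff_mem.mp ?_⟩
  rwa [← Ideal.Quotient.mkₐ_eq_mk k, ← aeval_algHom_apply, aeval_def]

theorem two_le_ringKrullDim_of_transcendental {k : Type*} {B : Type u} [Field k] [CommRing B]
    [IsDomain B] [Algebra k B] [Algebra.FiniteType k B] {x y : B} (hx : Transcendental k x)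
    (hy : Transcendental (Algebra.adjoin k {x}) y) : 2 ≤ ringKrullDim B := by
  have : Algebra.FiniteType (Algebra.adjoin k {x}) B :=
    .of_restrictScalars_finiteType k (Algebra.adjoin k {x}) B
  obtain ⟨Q₁, hQ₁, hQ₁bot, hQ₁x⟩ := exists_isPrime_ne_bot_comap_eq_bot_of_transcendental hy
  -- A maximal ideal would contain a nonzero polynomial in `x`, but `Q₁` meets `k[x]` only in `0`.
  have hQ₁max : ¬ Q₁.IsMaximal := fun hmax ↦ by
    obtain ⟨q, hq, hqQ⟩ := hmax.exists_monic_aeval_mem (k := k) x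
    have : (⟨aeval x q, aeval_mem_adjoin_singleton k x⟩ : Algebra.adjoin k {x}) ∈
        Q₁.comap (algebraMap _ B) := hqQ
    rw [hQ₁x, Ideal.mem_bot, Subtype.ext_iff] at this
    exact hx ⟨q, hq.ne_zero, this⟩
  obtain ⟨Q₂, hQ₂, hQ₁₂⟩ := Q₁.exists_le_maximal hQ₁.ne_top
  have hQ₁height : 1 ≤ Q₁.height :=
    Order.one_le_iff_ne_zero.mpr (Ideal.height_eq_zero_iff_eq_bot.not.mpr hQ₁bot)
  have hQ₂height : 2 ≤ Q₂.height := (add_le_add_left hQ₁height 1).trans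
    (Ideal.height_add_one_le_of_lt_of_isPrime (hQ₁₂.lt_of_ne fun h ↦ hQ₁max (h ▸ hQ₂)))
  exact (WithBot.coe_le_coe.mpr hQ₂height).trans Ideal.height_le_ringKrullDim_of_isPrime

theorem IsChain.natCast_le_height {α : Type*} [PartialOrder α] (n : ℕ) :
    ∀ {t : Set α} {x : α}, IsChain (· < ·) t → t ⊆ Set.Iio x → t.encard = n →
      (n : ℕ∞) ≤ Order.height x := by
  induction n with
  | zero => simp
  | succ n ih =>
    intro t x ht htx htn
    obtain ⟨m, hm⟩ := (Set.finite_of_encard_eq_coe htn).exists_maximal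
      (Set.nonempty_of_encard_ne_zero (by simp [htn]))
    have hbelow : t \ {m} ⊆ Set.Iio m := fun y ⟨hy, hym⟩ ↦
      (ht hy hm.1 hym).resolve_right fun hmy ↦ hmy.not_ge (hm.2 hy hmy.le)
    have hcard : (t \ {m}).encard = n := by
      have := Set.encard_sdiff_singleton_add_one hm.1
      rw [htn, Nat.cast_succ] at this
      exact WithTop.add_right_cancel ENat.one_ne_top this
    calc ((n + 1 : ℕ) : ℕ∞) = n + 1 := by push_cast; rfl
      _ ≤ Order.height m + 1 := by gcongr; exact ih (ht.mono Set.sdiff_subset) hbelow hcard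
      _ ≤ Order.height x := Order.height_add_one_le (htx hm.1)

theorem Set.chainHeight_Iio_le_height {α : Type*} [PartialOrder α] (x : α) :
    (Set.Iio x).chainHeight (· < ·) ≤ Order.height x := by
  refine ENat.forall_natCast_le_iff_le.mp fun n hn ↦ ?_
  obtain ⟨t, htx, htn, ht⟩ := Set.exists_isChain_of_le_chainHeight n hn
  exact ht.natCast_le_height n htx htn

theorem idealHeight_le_height {A : Type*} [CommRing A] (P : Ideal A) [hP : P.IsPrime] :
    idealHeight P ≤ P.height := by
  let asIdealLT : ((· < ·) : PrimeSpectrum A → PrimeSpectrum A → Prop) ↪r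
      ((· < ·) : Ideal A → Ideal A → Prop) :=
    ⟨⟨PrimeSpectrum.asIdeal, fun _ _ ↦ PrimeSpectrum.ext⟩, PrimeSpectrum.asIdeal_lt_asIdeal _ _⟩
  have hset : {Q : Ideal A | Q.IsPrime ∧ Q < P} = asIdealLT '' Set.Iio ⟨P, hP⟩ := by
    ext Q
    exact ⟨fun ⟨hQ, hQP⟩ ↦ ⟨⟨Q, hQ⟩, hQP, rfl⟩, by rintro ⟨Q, hQP, rfl⟩; exact ⟨Q.2, hQP⟩⟩
  rw [idealHeight, hset, Set.chainHeight_eq_of_relEmbedding,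
    PrimeSpectrum.height_eq_orderHeight ⟨P, hP⟩]
  exact Set.chainHeight_Iio_le_height _

theorem Ideal.height_add_ringKrullDim_quotient_le {A : Type*} [CommRing A] (P : Ideal A)
    [hP : P.IsPrime] : P.height + ringKrullDim (A ⧸ P) ≤ ringKrullDim A := by
  set p : PrimeSpectrum A := ⟨P, hP⟩
  have hzero : PrimeSpectrum.zeroLocus (P : Set A) = Set.Ici p := by
    ext q
    exact PrimeSpectrum.mem_zeroLocus q P
  have : Nonempty (PrimeSpectrum A) := ⟨p⟩
  rw [ringKrullDim_quotient, hzero, ← Order.coheight_eq_krullDim_Ici,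
    PrimeSpectrum.height_eq_orderHeight p, ← WithBot.coe_add, ringKrullDim,
    Order.krullDim_eq_iSup_height_add_coheight_of_nonempty]
  exact WithBot.coe_le_coe.mpr (le_iSup (fun q ↦ Order.height q + Order.coheight q) p)

namespace PoissonBracket

section CommRing

variable {k A : Type*} [CommRing k] [CommRing A] [Algebra k A] (pb : PoissonBracket k A)

theorem br_one_left (a : A) : pb.br 1 a = 0 := by
  simpa using pb.leibniz 1 1 a

theorem br_mul_right (a x y : A) : pb.br a (x * y) = x * pb.br a y + y * pb.br a x := by
  rw [pb.antisymm a, pb.leibniz, pb.antisymm y, pb.antisymm x]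
  ring

def hamiltonian (a : A) : Derivation k A A where
  toLinearMap := pb.br a
  map_one_eq_zero' := by
    change pb.br a 1 = 0
    rw [pb.antisymm, br_one_left, neg_zero]
  leibniz' x y := pb.br_mul_right a x y

theorem IsPoissonIdeal.br_mem_left {pb : PoissonBracket k A} {I : Ideal A}
    (hI : pb.IsPoissonIdeal I) (a : A) {x : A} (hx : x ∈ I) : pb.br a x ∈ I := by
  rw [pb.antisymm]
  exact I.neg_mem (hI x hx a)

def quotientHamiltonian {I : Ideal A} (hI : pb.IsPoissonIdeal I) (a : A) :
    Derivation k (A ⧸ I) (A ⧸ I) :=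
  (pb.hamiltonian a).quotient I fun _ ↦ hI.br_mem_left a

@[simp]
theorem quotientHamiltonian_mk {I : Ideal A} (hI : pb.IsPoissonIdeal I) (a x : A) :
    pb.quotientHamiltonian hI a (Ideal.Quotient.mk I x) = Ideal.Quotient.mk I (pb.br a x) :=
  rfl

end CommRing

section Field

variable {k A : Type*} [Field k] [CommRing A] [Algebra k A] (pb : PoissonBracket k A)

theorem br_self [NeZero (2 : k)] (a : A) : pb.br a a = 0 := by
  have h : (2 : k) • pb.br a a = 0 := by
    rw [two_smul]
    nth_rewrite 1 [pb.antisymm]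
    exact neg_add_cancel _
  exact (smul_eq_zero.mp h).resolve_left two_ne_zero

variable [CharZero k] {P : Ideal A} [P.IsPrime] (hP : pb.IsPoissonIdeal P) {a b : A}
include hP

theorem transcendental_mk_of_br_notMem (hab : pb.br a b ∉ P) :
    Transcendental k (Ideal.Quotient.mk P a) := by
  have : CharZero (A ⧸ P) := charZero_of_injective_algebraMap (algebraMap k (A ⧸ P)).injective
  refine (pb.quotientHamiltonian hP b).transcendental_of_ne_zero ?_
  rw [quotientHamiltonian_mk, pb.antisymm, map_neg, neg_ne_zero, ne_eq,
    Ideal.Quotient.eq_zero_iff_mem]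
  exact hab

theorem transcendental_adjoin_mk_of_br_notMem (hab : pb.br a b ∉ P) :
    Transcendental (Algebra.adjoin k {Ideal.Quotient.mk P a}) (Ideal.Quotient.mk P b) := by
  have : CharZero (A ⧸ P) := charZero_of_injective_algebraMap (algebraMap k (A ⧸ P)).injective
  set D := pb.quotientHamiltonian hP a
  have hD : ∀ s ∈ Algebra.adjoin k {Ideal.Quotient.mk P a}, D s = 0 := by
    refine fun s hs ↦ Derivation.eqOn_adjoin (D2 := 0) ?_ hs
    rintro _ rfl
    change Ideal.Quotient.mk P (pb.br a a) = 0
    rw [br_self, map_zero]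
  refine (D.extendScalars _ hD).transcendental_of_ne_zero ?_
  rw [Derivation.extendScalars_apply, quotientHamiltonian_mk, ne_eq,
    Ideal.Quotient.eq_zero_iff_mem]
  exact hab

end Field

end PoissonBracket

theorem poisson_primes_of_large_height_general
    (A : Type*) [CommRing A] [Algebra ℂ A]
    (hfg : Algebra.FiniteType ℂ A) (pb : PoissonBracket ℂ A)
    (d : ℕ) (hdim : ringKrullDim A = d)
    (hnontriv : ∃ a b : A, pb.br a b ≠ 0) :
    (∀ P : Ideal A, P.IsPrime → pb.IsPoissonIdeal P →
        ((d - 1 : ℕ) : ℕ∞) ≤ idealHeight P → ∀ a b : A, pb.br a b ∈ P) ∧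
      sInf {P : Ideal A | P.IsPrime ∧ pb.IsPoissonIdeal P ∧
        ((d - 1 : ℕ) : ℕ∞) ≤ idealHeight P} ≠ ⊥ := by
  have hbr : ∀ P : Ideal A, P.IsPrime → pb.IsPoissonIdeal P →
      ((d - 1 : ℕ) : ℕ∞) ≤ idealHeight P → ∀ a b : A, pb.br a b ∈ P := by
    intro P hP hPoisson hheight a b
    by_contra hab
    have hquot : 2 ≤ ringKrullDim (A ⧸ P) := two_le_ringKrullDim_of_transcendental
      (pb.transcendental_mk_of_br_notMem hPoisson hab)
      (pb.transcendental_adjoin_mk_of_br_notMem hPoisson hab)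
    have hheight' : ((d - 1 : ℕ) : WithBot ℕ∞) ≤ P.height :=
      WithBot.coe_le_coe.mpr (hheight.trans (idealHeight_le_height P))
    have : ((d - 1 + 2 : ℕ) : WithBot ℕ∞) ≤ d := by
      rw [← hdim, Nat.cast_add]
      exact (add_le_add hheight' hquot).trans P.height_add_ringKrullDim_quotient_le
    norm_cast at this
    omega
  refine ⟨hbr, fun hbot ↦ ?_⟩
  obtain ⟨a, b, hab⟩ := hnontriv
  refine hab (Ideal.mem_bot.mp (hbot ▸ Submodule.mem_sInf.mpr ?_))
  exact fun P ⟨hP, hPoisson, hheight⟩ ↦ hbr P hP hPoisson hheight a b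

/-- Let `A` be a complex affine Poisson algebra of Krull dimension `d`
whose Poisson bracket is not identically zero.  Then every Poisson prime ideal of height
at least `d - 1` contains `{a, b}` for all `a, b ∈ A`; in particular the intersection of
all Poisson prime ideals of height at least `d - 1` is a nonzero ideal. -/
theorem poisson_primes_of_large_height
    (A : Type*) [CommRing A] [IsDomain A] [Algebra ℂ A]
    (hfg : Algebra.FiniteType ℂ A) (pb : PoissonBracket ℂ A)
    (d : ℕ) (hdim : ringKrullDim A = d)
    (hnontriv : ∃ a b : A, pb.br a b ≠ 0) :
    (∀ P : Ideal A, P.IsPrime → pb.IsPoissonIdeal P →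
        ((d - 1 : ℕ) : ℕ∞) ≤ idealHeight P → ∀ a b : A, pb.br a b ∈ P) ∧
      sInf {P : Ideal A | P.IsPrime ∧ pb.IsPoissonIdeal P ∧
        ((d - 1 : ℕ) : ℕ∞) ≤ idealHeight P} ≠ ⊥ :=
  poisson_primes_of_large_height_general A hfg pb d hdim hnontriv
end
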